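/- Let Δ be a simplicial complex on n vertices, not the boundary of a simplex, with m_v, m'_v as in the Peeva–Velasco construction and its refinement, and write m_v = m''_v · m'_v. For monomials h_v dividing m''_v, the ideal I = (h_1 m'_1,…,h_n m'_n) has no redundant generators: h_i m'_i does not divide h_j m'_j for i ≠ j. -/

import Mathlib

noncomputable section
attribute [local instance] Classical.propDecidable

/-- The simplicial complex generated by a set of faces: all nonempty subsets. -/
def gen {V : Type} (S : Finset (Finset V)) : Finset (Finset V) :=
  S.biUnion fun F => F.powerset.filter (· ≠ ∅)

/-- The facets (maximal faces) of a complex given by its finite set of faces. -/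
def facets {V : Type} (Δ : Finset (Finset V)) : Finset (Finset V) :=
  Δ.filter fun F => ∀ G ∈ Δ, F ⊆ G → F = G

/-- A (finite, abstract) simplicial complex: nonempty faces, closed under nonempty subsets. -/
def IsComplex {V : Type} (Δ : Finset (Finset V)) : Prop :=
  ∅ ∉ Δ ∧ ∀ F ∈ Δ, ∀ G, G ⊆ F → G ≠ ∅ → G ∈ Δ

/-- `F` is a leaf of `Δ`: `F` is a facet which is either the only facet, or
there is another facet `G` (a joint) with `F ∩ (Δ ∖ F) ⊆ G`, i.e. the
intersection of `F` with any other facet is contained in `G`. -/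
def IsLeaf {V : Type} (Δ : Finset (Finset V)) (F : Finset V) : Prop :=
  F ∈ facets Δ ∧ (facets Δ = {F} ∨
    ∃ G ∈ facets Δ, G ≠ F ∧ ∀ H ∈ facets Δ, H ≠ F → F ∩ H ⊆ G)

def HasLeaf {V : Type} (Δ : Finset (Finset V)) : Prop := ∃ F, IsLeaf Δ F

/-- A forest: every nonempty subcollection (complex generated by a subset of the
facets) has a leaf. -/
def IsForest {V : Type} (Δ : Finset (Finset V)) : Prop :=
  ∀ S ⊆ facets Δ, S.Nonempty → HasLeaf (gen S)

/-- Vertex set of a complex. -/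
def vtx {V : Type} (Δ : Finset (Finset V)) : Finset V := Δ.sup id

/-- Connectedness: nonempty, and any two vertices are joined by a chain of faces. -/
def Conn {V : Type} (Δ : Finset (Finset V)) : Prop :=
  Δ.Nonempty ∧ ∀ u ∈ vtx Δ, ∀ v ∈ vtx Δ,
    Relation.ReflTransGen (fun a b => ∃ σ ∈ Δ, a ∈ σ ∧ b ∈ σ) u v

/-- A simplicial tree is a connected forest. -/
def IsTree {V : Type} (Δ : Finset (Finset V)) : Prop := Conn Δ ∧ IsForest Δ

/-! Monomials in the variables `x_σ`, indexed by the nonempty faces `σ` of a complex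
`Δ`.  All monomials arising in the Peeva–Velasco construction and its refinement are
squarefree, so we represent a squarefree monomial by its finite set of variables
(a `Finset` of faces); then divisibility is `⊆`, lcm is `∪`, and a product of
monomials with disjoint supports is `∪`. -/

/-- The Peeva–Velasco generator `m_v = ∏_{σ ∈ Δ, v ∉ σ} x_σ`. -/
def mPV {V : Type} (Δ : Finset (Finset V)) (v : V) : Finset (Finset V) :=
  Δ.filter fun σ => v ∉ σ

/-- `A_Δ(v)`: the facets of `Δ` not containing `v`. -/
def AF {V : Type} (Δ : Finset (Finset V)) (v : V) : Finset (Finset V) :=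
  (facets Δ).filter fun F => v ∉ F

/-- `B_Δ(v)`: the facets of `Δ` containing `v`. -/
def BF {V : Type} (Δ : Finset (Finset V)) (v : V) : Finset (Finset V) :=
  (facets Δ).filter fun F => v ∈ F

/-- The refined generator `m'_v`: the squarefree product of the variables
`x_{G∖{v}}` for facets `G ∋ v`, the variables `x_F` for facets `F ∌ v`, and the
variables `x_σ` for maximal proper (nonempty) faces `σ` of such facets `F`. -/
def mPV' {V : Type} (Δ : Finset (Finset V)) (v : V) : Finset (Finset V) :=
  ((BF Δ v).image (fun G => G.erase v)).filter (· ≠ ∅) ∪ AF Δ v ∪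
    (AF Δ v).biUnion fun F => F.powerset.filter fun σ => σ.card + 1 = F.card ∧ σ ≠ ∅

/-- `Δ` is the boundary of the full simplex on its `n` vertices: all proper
nonempty subsets of the vertex set. -/
def IsBoundaryOfFullSimplex {n : ℕ} (Δ : Finset (Finset (Fin n))) : Prop :=
  Δ = (Finset.univ : Finset (Fin n)).powerset.filter
        fun s => s ≠ ∅ ∧ s ≠ Finset.univ

/-! A vertex `j` lies in some facet `F`, and `F` (or `F ∖ {i}`) is a variable of `m'_i`
containing `j`, whereas no variable of `m_j`, hence none of `h_j m'_j`, contains `j`. -/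

theorem exists_mem_facets_superset {V : Type} {Δ : Finset (Finset V)} {σ : Finset V}
    (hσ : σ ∈ Δ) : ∃ F ∈ facets Δ, σ ⊆ F := by
  obtain ⟨F, hσF, hF⟩ := Δ.exists_le_maximal hσ
  exact ⟨F, Finset.mem_filter.mpr ⟨hF.prop, fun G hG hFG => hF.eq_of_le hG hFG⟩, hσF⟩

theorem notMem_of_mem_mPV {V : Type} {Δ : Finset (Finset V)} {v : V} {σ : Finset V}
    (hσ : σ ∈ mPV Δ v) : v ∉ σ :=
  (Finset.mem_filter.mp hσ).2

theorem notMem_of_mem_mPV' {V : Type} {Δ : Finset (Finset V)} {v : V} {σ : Finset V}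
    (hσ : σ ∈ mPV' Δ v) : v ∉ σ := by
  simp only [mPV', AF, BF, Finset.mem_union, Finset.mem_filter, Finset.mem_image,
    Finset.mem_biUnion, Finset.mem_powerset] at hσ
  rcases hσ with (⟨⟨G, -, rfl⟩, -⟩ | ⟨-, hvσ⟩) | ⟨F, ⟨-, hvF⟩, hσF, -⟩
  · exact Finset.notMem_erase v G
  · exact hvσ
  · exact fun hv => hvF (hσF hv)

theorem exists_mem_mPV'_of_mem_facets {V : Type} {Δ : Finset (Finset V)} {v w : V}
    {F : Finset V} (hF : F ∈ facets Δ) (hwF : w ∈ F) (hwv : w ≠ v) :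
    ∃ σ ∈ mPV' Δ v, w ∈ σ := by
  by_cases hvF : v ∈ F
  · have hw : w ∈ F.erase v := Finset.mem_erase.mpr ⟨hwv, hwF⟩
    refine ⟨F.erase v, Finset.mem_union_left _ (Finset.mem_union_left _ ?_), hw⟩
    exact Finset.mem_filter.mpr ⟨Finset.mem_image_of_mem _ (Finset.mem_filter.mpr ⟨hF, hvF⟩),
      Finset.ne_empty_of_mem hw⟩
  · exact ⟨F, Finset.mem_union_left _ (Finset.mem_union_right _
      (Finset.mem_filter.mpr ⟨hF, hvF⟩)), hwF⟩

theorem exists_mem_mPV'_of_singleton_mem {V : Type} {Δ : Finset (Finset V)} {v w : V}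
    (hw : {w} ∈ Δ) (hwv : w ≠ v) : ∃ σ ∈ mPV' Δ v, w ∈ σ := by
  obtain ⟨F, hF, hwF⟩ := exists_mem_facets_superset hw
  exact exists_mem_mPV'_of_mem_facets hF (Finset.singleton_subset_iff.mp hwF) hwv

theorem notMem_of_mem_union_mPV' {V : Type} [DecidableEq V] {Δ : Finset (Finset V)} {v : V}
    {h : Finset (Finset V)} {σ : Finset V} (hh : h ⊆ mPV Δ v \ mPV' Δ v) (hσ : σ ∈ h ∪ mPV' Δ v) :
    v ∉ σ := by
  rcases Finset.mem_union.mp hσ with hσh | hσm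
  · exact notMem_of_mem_mPV (Finset.mem_sdiff.mp (hh hσh)).1
  · exact notMem_of_mem_mPV' hσm

theorem scaled_generators_no_redundant_general {n : ℕ} (Δ : Finset (Finset (Fin n)))
    (hvtx : ∀ v : Fin n, ({v} : Finset (Fin n)) ∈ Δ)
    (h : Fin n → Finset (Finset (Fin n)))
    (hh : ∀ v : Fin n, h v ⊆ mPV Δ v \ mPV' Δ v) :
    ∀ i j : Fin n, i ≠ j → ¬ (h i ∪ mPV' Δ i) ⊆ (h j ∪ mPV' Δ j) := by
  intro i j hij hsub
  obtain ⟨σ, hσi, hjσ⟩ := exists_mem_mPV'_of_singleton_mem (hvtx j) hij.symm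
  exact notMem_of_mem_union_mPV' (hh j) (hsub (Finset.mem_union_right _ hσi)) hjσ

/-- With `m_v = m''_v · m'_v` (so `m''_v` is the squarefree
monomial with support `mPV Δ v \ mPV' Δ v`), for any choice of squarefree monomials
`h_v ∣ m''_v` the ideal `I = (h_1 m'_1, …, h_n m'_n)` has no redundant generators:
`h_i m'_i ∤ h_j m'_j` for `i ≠ j`.  (Products of squarefree monomials with disjoint
supports correspond to unions of supports and divisibility to containment.) -/
theorem scaled_generators_no_redundant {n : ℕ} (Δ : Finset (Finset (Fin n)))
    (hΔ : IsComplex Δ) (hvtx : ∀ v : Fin n, ({v} : Finset (Fin n)) ∈ Δ)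
    (hnb : ¬ IsBoundaryOfFullSimplex Δ)
    (h : Fin n → Finset (Finset (Fin n)))
    (hh : ∀ v : Fin n, h v ⊆ mPV Δ v \ mPV' Δ v) :
    ∀ i j : Fin n, i ≠ j → ¬ (h i ∪ mPV' Δ i) ⊆ (h j ∪ mPV' Δ j) :=
  scaled_generators_no_redundant_general Δ hvtx h hh
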